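/- arXiv:1408.3528 — 3 statements merged into one kernel-verified Lean document; each statement's English description precedes it below -/
import Mathlib

section
/- Suppose the real Banach space X is nontrivial (X ≠ {0}). Then the generalized Musielak-Orlicz sequence space l_Φ^A(X) contains a nonzero element if and only if there exists k ∈ ℕ such that the k-th column (|a_{nk}|)_{n=1}^∞ of A belongs to the Musielak-Orlicz sequence space l_Φ = {α = (α_n) ∈ ℝ^ℕ : ∑_{n=1}^∞ φ_n(|α_n|/σ) < ∞ for some σ > 0}. -/
open Filter Topology

/-- An Orlicz function: convex, nondecreasing, continuous on `[0,∞)`,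
vanishing at `0`, positive on `(0,∞)`, tending to `∞` at `∞`. -/
structure IsOrliczFn (φ : ℝ → ℝ) : Prop where
  convexOn : ConvexOn ℝ (Set.Ici (0 : ℝ)) φ
  monotoneOn : MonotoneOn φ (Set.Ici (0 : ℝ))
  continuousOn : ContinuousOn φ (Set.Ici (0 : ℝ))
  map_zero : φ 0 = 0
  pos : ∀ t : ℝ, 0 < t → 0 < φ t
  tendsto_atTop : Filter.Tendsto φ Filter.atTop Filter.atTop

/-- A Musielak-Orlicz function: a sequence of Orlicz functions. -/
def IsMusielakOrlicz (Φ : ℕ → ℝ → ℝ) : Prop := ∀ n, IsOrliczFn (Φ n)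

/-- Condition δ₂ for a Musielak-Orlicz function. -/
def MOCondDelta2 (Φ : ℕ → ℝ → ℝ) : Prop :=
  ∃ K > (0 : ℝ), ∃ δ > (0 : ℝ), ∃ c : ℕ → ℝ, (∀ n, 0 ≤ c n) ∧ Summable c ∧
    ∀ n : ℕ, ∀ x : ℝ, 0 ≤ x → Φ n x ≤ δ → Φ n (2 * x) ≤ K * Φ n x + c n

/-- Condition (*) for a Musielak-Orlicz function. -/
def MOCondStar (Φ : ℕ → ℝ → ℝ) : Prop :=
  ∀ ε : ℝ, ε ∈ Set.Ioo (0 : ℝ) 1 → ∃ δ > (0 : ℝ), ∀ n : ℕ, ∀ u : ℝ, 0 ≤ u →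
    Φ n u < 1 - ε → Φ n ((1 + δ) * u) ≤ 1

/-- The class 𝒜 of infinite matrices: every column is nonzero. -/
def MatrixClassA (a : ℕ → ℕ → ℝ) : Prop := ∀ k, ∃ n, a n k ≠ 0

/-- A triangle matrix: nonzero diagonal, zero above the diagonal. -/
def IsTriangle (a : ℕ → ℕ → ℝ) : Prop := (∀ n, a n n ≠ 0) ∧ ∀ n k, n < k → a n k = 0

/-- The `n`-th row sum `∑_k |a_{nk}| ‖x_k‖`. -/
noncomputable def rowSum {X : Type*} [NormedAddCommGroup X]
    (a : ℕ → ℕ → ℝ) (x : ℕ → X) (n : ℕ) : ℝ :=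
  ∑' k, |a n k| * ‖x k‖

/-- Membership in the generalized Musielak-Orlicz sequence space `l_Φ^A(X)`:
`x` is a bounded sequence whose row sums are finite and
`∑_n φ_n(rowSum_n / σ) < ∞` for some `σ > 0`. -/
def MemL {X : Type*} [NormedAddCommGroup X]
    (Φ : ℕ → ℝ → ℝ) (a : ℕ → ℕ → ℝ) (x : ℕ → X) : Prop :=
  (∃ C : ℝ, ∀ k, ‖x k‖ ≤ C) ∧ (∀ n, Summable fun k => |a n k| * ‖x k‖) ∧
    ∃ σ > (0 : ℝ), Summable fun n => Φ n (rowSum a x n / σ)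

/-- Membership in `h_Φ^A(X)`: as `MemL` but for every `σ > 0`. -/
def MemH {X : Type*} [NormedAddCommGroup X]
    (Φ : ℕ → ℝ → ℝ) (a : ℕ → ℕ → ℝ) (x : ℕ → X) : Prop :=
  (∃ C : ℝ, ∀ k, ‖x k‖ ≤ C) ∧ (∀ n, Summable fun k => |a n k| * ‖x k‖) ∧
    ∀ σ > (0 : ℝ), Summable fun n => Φ n (rowSum a x n / σ)

/-- The Luxemburg-type norm `‖x‖_Φ^A`. -/
noncomputable def ANorm {X : Type*} [NormedAddCommGroup X]
    (Φ : ℕ → ℝ → ℝ) (a : ℕ → ℕ → ℝ) (x : ℕ → X) : ℝ :=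
  sInf {σ : ℝ | 0 < σ ∧ (Summable fun n => Φ n (rowSum a x n / σ)) ∧
    (∑' n, Φ n (rowSum a x n / σ)) ≤ 1}

/-- The modular `ρ_Φ^A(x) = ∑_n φ_n(∑_k |a_{nk}| ‖x_k‖)`. -/
noncomputable def rhoA {X : Type*} [NormedAddCommGroup X]
    (Φ : ℕ → ℝ → ℝ) (a : ℕ → ℕ → ℝ) (x : ℕ → X) : ℝ :=
  ∑' n, Φ n (rowSum a x n)

/-- The `m`-th section of a sequence: first `m` coordinates kept, rest zero. -/
def sect {X : Type*} [Zero X] (x : ℕ → X) (m : ℕ) : ℕ → X :=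
  fun k => if k < m then x k else 0

/-- for nontrivial `X`, `l_Φ^A(X)` contains a nonzero element iff
some column `(|a_{nk}|)_n` of `A` belongs to `l_Φ`. -/
theorem nontrivial_iff_column_in_lPhi
    {X : Type*} [NormedAddCommGroup X] [NormedSpace ℝ X] [CompleteSpace X] [Nontrivial X]
    (Φ : ℕ → ℝ → ℝ) (hΦ : IsMusielakOrlicz Φ) (a : ℕ → ℕ → ℝ) :
    (∃ x : ℕ → X, MemL Φ a x ∧ x ≠ 0) ↔
      (∃ k : ℕ, ∃ σ > (0 : ℝ), Summable fun n => Φ n (|a n k| / σ)) := by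
  have hΦ0 : ∀ n t, 0 ≤ t → 0 ≤ Φ n t := by
    intro n t ht
    have := (hΦ n).monotoneOn (Set.self_mem_Ici) (Set.mem_Ici.2 ht) ht
    rwa [(hΦ n).map_zero] at this
  constructor
  · rintro ⟨x, ⟨⟨C, hC⟩, hsum, σ, hσ, hS⟩, hx⟩
    obtain ⟨k, hk⟩ : ∃ k, x k ≠ 0 := by
      by_contra h
      push_neg at h
      exact hx (funext h)
    have hxk : 0 < ‖x k‖ := norm_pos_iff.2 hk
    refine ⟨k, σ / ‖x k‖, div_pos hσ hxk, ?_⟩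
    apply Summable.of_nonneg_of_le (fun n => hΦ0 n _ ?_) (fun n => ?_) hS
    · positivity
    · apply (hΦ n).monotoneOn (Set.mem_Ici.2 (by positivity))
        (Set.mem_Ici.2 ?_) ?_
      · have : 0 ≤ rowSum a x n := tsum_nonneg fun j => by positivity
        positivity
      · rw [div_div_eq_mul_div]
        gcongr
        exact Summable.le_tsum (hsum n) k (fun j _ => by positivity)
  · rintro ⟨k, σ, hσ, hS⟩
    obtain ⟨v, hv⟩ := exists_ne (0 : X)
    have hvn : 0 < ‖v‖ := norm_pos_iff.2 hv
    set x : ℕ → X := fun j => if j = k then v else 0 with hxdef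
    have hrow : ∀ n, (fun j => |a n j| * ‖x j‖) = fun j => if j = k then |a n k| * ‖v‖ else 0 := by
      intro n
      funext j
      by_cases h : j = k <;> simp [hxdef, h]
    have hsumr : ∀ n, Summable fun j => |a n j| * ‖x j‖ := by
      intro n
      rw [hrow n]
      exact summable_of_ne_finset_zero (s := {k}) (fun j hj => by
        simp at hj; simp [hj])
    have hrs : ∀ n, rowSum a x n = |a n k| * ‖v‖ := by
      intro n
      rw [rowSum, hrow n]
      simp
    refine ⟨x, ⟨⟨‖v‖, fun j => ?_⟩, hsumr, σ * ‖v‖, mul_pos hσ hvn, ?_⟩, ?_⟩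
    · by_cases h : j = k <;> simp [hxdef, h, hvn.le]
    · have : (fun n => Φ n (rowSum a x n / (σ * ‖v‖))) = fun n => Φ n (|a n k| / σ) := by
        funext n
        rw [hrs n]
        congr 1
        field_simp
      rw [this]; exact hS
    · intro h
      have : x k = 0 := congrFun h k
      simp [hxdef] at this
      exact hv this
end

section
/- Suppose A belongs to the class 𝒜. Then h_Φ^A(X) is a closed linear subspace of (l_Φ^A(X), ‖·‖_Φ^A) (hence itself a Banach space), and h_Φ^A(X) has the AK-property: for every x̄ = (x_k) ∈ h_Φ^A(X), the sections x̄^{[m]} = (x_1, …, x_m, 0, 0, …) converge to x̄ in the norm ‖·‖_Φ^A as m → ∞. -/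
open Filter Topology

/-! The modular `∑ₙ φₙ(rₙ / σ)` is monotone in the row sums `rₙ` and convex in the scale: when
the row sums of `z` are dominated by those of `x` and `y`, the modular of `z` at `σ + τ` is at most
a convex combination of those of `x` at `σ` and `y` at `τ`. This gives the linear structure of
`h_Φ^A`, and closedness by writing `x = (x - y) + y` with `‖x - y‖_Φ^A < σ`. For the AK-property,
the row sums of `x - x^[m]` are tails of convergent series, so dominated convergence (by the
modular of `x`) drives the modular of `x - x^[m]` to `0` at every scale. -/

namespace IsOrliczFn

variable {φ : ℝ → ℝ}

theorem nonneg (hφ : IsOrliczFn φ) {t : ℝ} (ht : 0 ≤ t) : 0 ≤ φ t :=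
  hφ.map_zero ▸ hφ.monotoneOn Set.self_mem_Ici ht ht

theorem map_div_le_map_div (hφ : IsOrliczFn φ) {u v σ : ℝ} (hu : 0 ≤ u) (huv : u ≤ v)
    (hσ : 0 < σ) : φ (u / σ) ≤ φ (v / σ) :=
  hφ.monotoneOn (div_nonneg hu hσ.le) (div_nonneg (hu.trans huv) hσ.le) (by gcongr)

theorem map_mul_le (hφ : IsOrliczFn φ) {l t : ℝ} (hl₀ : 0 ≤ l) (hl₁ : l ≤ 1) (ht : 0 ≤ t) :
    φ (l * t) ≤ l * φ t := by
  simpa [hφ.map_zero] using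
    hφ.convexOn.2 Set.self_mem_Ici ht (sub_nonneg.2 hl₁) hl₀ (sub_add_cancel 1 l)

theorem map_add_div_add_le (hφ : IsOrliczFn φ) {u v σ τ : ℝ} (hu : 0 ≤ u) (hv : 0 ≤ v)
    (hσ : 0 < σ) (hτ : 0 < τ) :
    φ ((u + v) / (σ + τ)) ≤ σ / (σ + τ) * φ (u / σ) + τ / (σ + τ) * φ (v / τ) := by
  have hστ : 0 < σ + τ := hσ.trans (lt_add_of_pos_right σ hτ)
  have hmix : σ / (σ + τ) * (u / σ) + τ / (σ + τ) * (v / τ) = (u + v) / (σ + τ) := by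
    field_simp
  simpa [hmix] using hφ.convexOn.2 (div_nonneg hu hσ.le) (div_nonneg hv hτ.le)
    (div_nonneg hσ.le hστ.le) (div_nonneg hτ.le hστ.le) (by field_simp)

theorem tendsto_map_zero (hφ : IsOrliczFn φ) {ι : Type*} {l : Filter ι} {f : ι → ℝ}
    (hf₀ : ∀ i, 0 ≤ f i) (hf : Tendsto f l (𝓝 0)) : Tendsto (fun i => φ (f i)) l (𝓝 0) := by
  have hf' : Tendsto f l (𝓝[Set.Ici 0] 0) :=
    tendsto_nhdsWithin_of_tendsto_nhds_of_eventually_within _ hf (Eventually.of_forall hf₀)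
  exact hφ.map_zero ▸ (hφ.continuousOn 0 Set.self_mem_Ici).tendsto.comp hf'

end IsOrliczFn

section Modular

variable {Φ : ℕ → ℝ → ℝ} {r s t : ℕ → ℝ}

theorem summable_orlicz_of_le_add (hΦ : IsMusielakOrlicz Φ) (hr : ∀ n, 0 ≤ r n)
    (hs : ∀ n, 0 ≤ s n) (ht : ∀ n, 0 ≤ t n) (hle : ∀ n, r n ≤ s n + t n) {σ τ : ℝ}
    (hσ : 0 < σ) (hτ : 0 < τ) (hsσ : Summable fun n => Φ n (s n / σ))
    (htτ : Summable fun n => Φ n (t n / τ)) :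
    Summable fun n => Φ n (r n / (σ + τ)) := by
  have hστ : 0 < σ + τ := hσ.trans (lt_add_of_pos_right σ hτ)
  refine .of_nonneg_of_le (fun n => (hΦ n).nonneg (div_nonneg (hr n) hστ.le)) (fun n => ?_)
    ((hsσ.mul_left (σ / (σ + τ))).add (htτ.mul_left (τ / (σ + τ))))
  exact ((hΦ n).map_div_le_map_div (hr n) (hle n) hστ).trans
    ((hΦ n).map_add_div_add_le (hs n) (ht n) hσ hτ)

theorem exists_tsum_orlicz_le_one (hΦ : IsMusielakOrlicz Φ) (hr : ∀ n, 0 ≤ r n) {σ₀ : ℝ}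
    (hσ₀ : 0 < σ₀) (hsum : Summable fun n => Φ n (r n / σ₀)) :
    ∃ σ > 0, (Summable fun n => Φ n (r n / σ)) ∧ ∑' n, Φ n (r n / σ) ≤ 1 := by
  set S := ∑' n, Φ n (r n / σ₀)
  have hS : 0 ≤ S := tsum_nonneg fun n => (hΦ n).nonneg (div_nonneg (hr n) hσ₀.le)
  have hl₀ : 0 ≤ 1 / (S + 1) := by positivity
  have hl₁ : 1 / (S + 1) ≤ 1 := by rw [div_le_one (by positivity)]; linarith
  have hbound : ∀ n, Φ n (r n / (σ₀ * (S + 1))) ≤ 1 / (S + 1) * Φ n (r n / σ₀) := fun n => by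
    rw [show r n / (σ₀ * (S + 1)) = 1 / (S + 1) * (r n / σ₀) by field_simp]
    exact (hΦ n).map_mul_le hl₀ hl₁ (div_nonneg (hr n) hσ₀.le)
  have hsum' : Summable fun n => Φ n (r n / (σ₀ * (S + 1))) :=
    .of_nonneg_of_le (fun n => (hΦ n).nonneg (by have := hr n; positivity)) hbound
      (hsum.mul_left _)
  refine ⟨σ₀ * (S + 1), by positivity, hsum', ?_⟩
  calc ∑' n, Φ n (r n / (σ₀ * (S + 1))) ≤ ∑' n, 1 / (S + 1) * Φ n (r n / σ₀) :=
        hsum'.tsum_le_tsum hbound (hsum.mul_left _)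
    _ = S / (S + 1) := by rw [tsum_mul_left, one_div_mul_eq_div]
    _ ≤ 1 := by rw [div_le_one (by positivity)]; linarith

end Modular

section RowSum

variable {X : Type*} [NormedAddCommGroup X] {a : ℕ → ℕ → ℝ} {x y z : ℕ → X} {n : ℕ}

theorem rowSum_nonneg (a : ℕ → ℕ → ℝ) (x : ℕ → X) (n : ℕ) : 0 ≤ rowSum a x n :=
  tsum_nonneg fun _ => by positivity

theorem summable_row_of_norm_le_add (hz : ∀ k, ‖z k‖ ≤ ‖x k‖ + ‖y k‖)
    (hx : Summable fun k => |a n k| * ‖x k‖) (hy : Summable fun k => |a n k| * ‖y k‖) :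
    Summable fun k => |a n k| * ‖z k‖ :=
  .of_nonneg_of_le (fun _ => by positivity)
    (fun k => mul_add |a n k| ‖x k‖ ‖y k‖ ▸ mul_le_mul_of_nonneg_left (hz k) (abs_nonneg _))
    (hx.add hy)

theorem rowSum_le_add_of_norm_le_add (hz : ∀ k, ‖z k‖ ≤ ‖x k‖ + ‖y k‖)
    (hx : Summable fun k => |a n k| * ‖x k‖) (hy : Summable fun k => |a n k| * ‖y k‖) :
    rowSum a z n ≤ rowSum a x n + rowSum a y n := by
  rw [rowSum, rowSum, rowSum, ← hx.tsum_add hy]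
  exact (summable_row_of_norm_le_add hz hx hy).tsum_le_tsum
    (fun k => mul_add |a n k| ‖x k‖ ‖y k‖ ▸ mul_le_mul_of_nonneg_left (hz k) (abs_nonneg _))
    (hx.add hy)

theorem rowSum_smul [NormedSpace ℝ X] (c : ℝ) (x : ℕ → X) (n : ℕ) :
    rowSum a (c • x) n = |c| * rowSum a x n := by
  simp only [rowSum, Pi.smul_apply, norm_smul, Real.norm_eq_abs, ← tsum_mul_left]
  exact tsum_congr fun k => by ring

theorem rowSum_sub_sect (hx : Summable fun k => |a n k| * ‖x k‖) (m : ℕ) :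
    rowSum a (x - sect x m) n = ∑' k, |a n (k + m)| * ‖x (k + m)‖ := by
  have hsum : Summable fun k => |a n k| * ‖(x - sect x m) k‖ :=
    .of_nonneg_of_le (fun _ => by positivity) (fun k => by
      by_cases hk : k < m <;> simp [sect, hk, mul_nonneg]) hx
  rw [rowSum, ← hsum.sum_add_tsum_nat_add m,
    Finset.sum_eq_zero fun k hk => by simp [sect, Finset.mem_range.1 hk], zero_add]
  simp [sect]

theorem tendsto_rowSum_sub_sect (hx : Summable fun k => |a n k| * ‖x k‖) :
    Tendsto (fun m => rowSum a (x - sect x m) n) atTop (𝓝 0) := by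
  simpa only [rowSum_sub_sect hx] using tendsto_sum_nat_add fun k => |a n k| * ‖x k‖

theorem rowSum_sub_sect_le (hx : Summable fun k => |a n k| * ‖x k‖) (m : ℕ) :
    rowSum a (x - sect x m) n ≤ rowSum a x n := by
  rw [rowSum_sub_sect hx, rowSum, ← hx.sum_add_tsum_nat_add m]
  exact le_add_of_nonneg_left (Finset.sum_nonneg fun _ _ => by positivity)

end RowSum

section SequenceSpace

variable {X : Type*} [NormedAddCommGroup X] {Φ : ℕ → ℝ → ℝ} {a : ℕ → ℕ → ℝ} {x y z : ℕ → X}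

theorem ANorm_nonneg : 0 ≤ ANorm Φ a x :=
  Real.sInf_nonneg fun _ h => h.1.le

theorem ANorm_le {σ : ℝ} (hσ : 0 < σ) (hsum : Summable fun n => Φ n (rowSum a x n / σ))
    (hle : ∑' n, Φ n (rowSum a x n / σ) ≤ 1) : ANorm Φ a x ≤ σ :=
  csInf_le ⟨0, fun _ h => h.1.le⟩ ⟨hσ, hsum, hle⟩

theorem tendsto_ANorm_of_eventually_modular_le_one {ι : Type*} {l : Filter ι} {x : ι → ℕ → X}
    (h : ∀ σ > 0, ∀ᶠ i in l, (Summable fun n => Φ n (rowSum a (x i) n / σ)) ∧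
      ∑' n, Φ n (rowSum a (x i) n / σ) ≤ 1) :
    Tendsto (fun i => ANorm Φ a (x i)) l (𝓝 0) :=
  tendsto_order.2
    ⟨fun _ hb => Eventually.of_forall fun _ => hb.trans_le ANorm_nonneg,
     fun _ hb => (h _ (half_pos hb)).mono fun _ hi =>
      (ANorm_le (half_pos hb) hi.1 hi.2).trans_lt (half_lt_self hb)⟩

-- `MemL` makes the set defining `ANorm` nonempty; were it empty, `sInf` would be the junk `0`.
theorem MemL.exists_summable_of_ANorm_lt (hΦ : IsMusielakOrlicz Φ) (hx : MemL Φ a x) {ε : ℝ}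
    (h : ANorm Φ a x < ε) : ∃ σ, 0 < σ ∧ σ < ε ∧ Summable fun n => Φ n (rowSum a x n / σ) := by
  obtain ⟨-, -, σ₀, hσ₀, hsum₀⟩ := hx
  obtain ⟨σ, ⟨hσ, hsum, -⟩, hσε⟩ :=
    exists_lt_of_csInf_lt (exists_tsum_orlicz_le_one hΦ (rowSum_nonneg a x) hσ₀ hsum₀) h
  exact ⟨σ, hσ, hσε, hsum⟩

theorem summable_modular_of_norm_le_add (hΦ : IsMusielakOrlicz Φ)
    (hz : ∀ k, ‖z k‖ ≤ ‖x k‖ + ‖y k‖) (hx : ∀ n, Summable fun k => |a n k| * ‖x k‖)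
    (hy : ∀ n, Summable fun k => |a n k| * ‖y k‖) {σ τ : ℝ} (hσ : 0 < σ) (hτ : 0 < τ)
    (hxσ : Summable fun n => Φ n (rowSum a x n / σ))
    (hyτ : Summable fun n => Φ n (rowSum a y n / τ)) :
    Summable fun n => Φ n (rowSum a z n / (σ + τ)) :=
  summable_orlicz_of_le_add hΦ (rowSum_nonneg a z) (rowSum_nonneg a x) (rowSum_nonneg a y)
    (fun n => rowSum_le_add_of_norm_le_add hz (hx n) (hy n)) hσ hτ hxσ hyτ

theorem MemH.memL (hx : MemH Φ a x) : MemL Φ a x :=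
  ⟨hx.1, hx.2.1, 1, one_pos, hx.2.2 1 one_pos⟩

theorem MemL.of_norm_le_add (hΦ : IsMusielakOrlicz Φ) (hz : ∀ k, ‖z k‖ ≤ ‖x k‖ + ‖y k‖)
    (hx : MemL Φ a x) (hy : MemL Φ a y) : MemL Φ a z := by
  obtain ⟨⟨Cx, hCx⟩, hxrow, σ, hσ, hxσ⟩ := hx
  obtain ⟨⟨Cy, hCy⟩, hyrow, τ, hτ, hyτ⟩ := hy
  exact ⟨⟨Cx + Cy, fun k => (hz k).trans (add_le_add (hCx k) (hCy k))⟩,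
    fun n => summable_row_of_norm_le_add hz (hxrow n) (hyrow n), σ + τ, add_pos hσ hτ,
    summable_modular_of_norm_le_add hΦ hz hxrow hyrow hσ hτ hxσ hyτ⟩

theorem MemH.of_norm_le_add (hΦ : IsMusielakOrlicz Φ) (hz : ∀ k, ‖z k‖ ≤ ‖x k‖ + ‖y k‖)
    (hx : MemH Φ a x) (hy : MemH Φ a y) : MemH Φ a z := by
  obtain ⟨⟨Cx, hCx⟩, hxrow, hxmod⟩ := hx
  obtain ⟨⟨Cy, hCy⟩, hyrow, hymod⟩ := hy
  refine ⟨⟨Cx + Cy, fun k => (hz k).trans (add_le_add (hCx k) (hCy k))⟩,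
    fun n => summable_row_of_norm_le_add hz (hxrow n) (hyrow n), fun σ hσ => ?_⟩
  simpa only [add_halves] using summable_modular_of_norm_le_add hΦ hz hxrow hyrow
    (half_pos hσ) (half_pos hσ) (hxmod _ (half_pos hσ)) (hymod _ (half_pos hσ))

theorem MemH.smul [NormedSpace ℝ X] (hΦ : IsMusielakOrlicz Φ) (c : ℝ) (hx : MemH Φ a x) :
    MemH Φ a (c • x) := by
  obtain ⟨⟨C, hC⟩, hrow, hmod⟩ := hx
  have hrow_smul : ∀ n k, |a n k| * ‖(c • x) k‖ = |c| * (|a n k| * ‖x k‖) := fun n k => by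
    rw [Pi.smul_apply, norm_smul, Real.norm_eq_abs]
    ring
  refine ⟨⟨|c| * C, fun k => ?_⟩, fun n => ?_, fun σ hσ => ?_⟩
  · rw [Pi.smul_apply, norm_smul, Real.norm_eq_abs]
    exact mul_le_mul_of_nonneg_left (hC k) (abs_nonneg c)
  · simpa only [hrow_smul] using (hrow n).mul_left |c|
  · simp_rw [rowSum_smul]
    rcases eq_or_ne c 0 with rfl | hc
    · simp [(hΦ _).map_zero]
    · simpa only [div_div_eq_mul_div, mul_comm] using hmod (σ / |c|) (by positivity)

theorem MemH.of_forall_ANorm_sub_lt (hΦ : IsMusielakOrlicz Φ) (hx : MemL Φ a x)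
    (happrox : ∀ ε > (0 : ℝ), ∃ y, MemH Φ a y ∧ ANorm Φ a (x - y) < ε) : MemH Φ a x := by
  refine ⟨hx.1, hx.2.1, fun σ hσ => ?_⟩
  obtain ⟨y, hy, hxy⟩ := happrox σ hσ
  have hxyL : MemL Φ a (x - y) := hx.of_norm_le_add hΦ (fun k => norm_sub_le (x k) (y k)) hy.memL
  obtain ⟨τ, hτ, hτσ, hxyτ⟩ := hxyL.exists_summable_of_ANorm_lt hΦ hxy
  simpa only [add_sub_cancel] using summable_modular_of_norm_le_add hΦ
    (fun k => norm_le_norm_sub_add (x k) (y k)) hxyL.2.1 hy.2.1 hτ (sub_pos.2 hτσ) hxyτ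
    (hy.2.2 _ (sub_pos.2 hτσ))

theorem MemH.tendsto_ANorm_sub_sect (hΦ : IsMusielakOrlicz Φ) (hx : MemH Φ a x) :
    Tendsto (fun m => ANorm Φ a (x - sect x m)) atTop (𝓝 0) := by
  obtain ⟨-, hrow, hmod⟩ := hx
  refine tendsto_ANorm_of_eventually_modular_le_one fun σ hσ => ?_
  have hnonneg : ∀ m n, 0 ≤ Φ n (rowSum a (x - sect x m) n / σ) := fun m n =>
    (hΦ n).nonneg (div_nonneg (rowSum_nonneg a _ n) hσ.le)
  have hle : ∀ m n, Φ n (rowSum a (x - sect x m) n / σ) ≤ Φ n (rowSum a x n / σ) := fun m n =>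
    (hΦ n).map_div_le_map_div (rowSum_nonneg a _ n) (rowSum_sub_sect_le (hrow n) m) hσ
  have hterm : ∀ n, Tendsto (fun m => Φ n (rowSum a (x - sect x m) n / σ)) atTop (𝓝 0) :=
    fun n => (hΦ n).tendsto_map_zero (fun m => div_nonneg (rowSum_nonneg a _ n) hσ.le)
      (by simpa using (tendsto_rowSum_sub_sect (hrow n)).div_const σ)
  have hlim : Tendsto (fun m => ∑' n, Φ n (rowSum a (x - sect x m) n / σ)) atTop (𝓝 0) := by
    simpa using tendsto_tsum_of_dominated_convergence (hmod σ hσ) hterm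
      (Eventually.of_forall fun m n => (Real.norm_of_nonneg (hnonneg m n)).trans_le (hle m n))
  exact (hlim.eventually_lt_const one_pos).mono fun m hm =>
    ⟨.of_nonneg_of_le (hnonneg m) (hle m) (hmod σ hσ), hm.le⟩

end SequenceSpace

theorem hPhiA_closed_subspace_and_AK_general
    {X : Type*} [NormedAddCommGroup X] [NormedSpace ℝ X]
    (Φ : ℕ → ℝ → ℝ) (hΦ : IsMusielakOrlicz Φ)
    (a : ℕ → ℕ → ℝ) :
    (∀ x : ℕ → X, MemH Φ a x → MemL Φ a x) ∧
    (∀ x y : ℕ → X, MemH Φ a x → MemH Φ a y → MemH Φ a (x + y)) ∧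
    (∀ (c : ℝ) (x : ℕ → X), MemH Φ a x → MemH Φ a (c • x)) ∧
    (∀ x : ℕ → X, MemL Φ a x →
      (∀ ε > (0 : ℝ), ∃ y : ℕ → X, MemH Φ a y ∧ ANorm Φ a (x - y) < ε) →
      MemH Φ a x) ∧
    (∀ x : ℕ → X, MemH Φ a x →
      Tendsto (fun m => ANorm Φ a (x - sect x m)) atTop (𝓝 0)) :=
  ⟨fun _ hx => hx.memL,
   fun x y hx hy => hx.of_norm_le_add hΦ (fun k => norm_add_le (x k) (y k)) hy,
   fun c _ hx => hx.smul hΦ c,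
   fun _ hx happrox => .of_forall_ANorm_sub_lt hΦ hx happrox,
   fun _ hx => hx.tendsto_ANorm_sub_sect hΦ⟩

/-- if `A ∈ 𝒜`, then `h_Φ^A(X)` is a closed linear subspace of
`(l_Φ^A(X), ‖·‖_Φ^A)` and has the AK-property. -/
theorem hPhiA_closed_subspace_and_AK
    {X : Type*} [NormedAddCommGroup X] [NormedSpace ℝ X] [CompleteSpace X]
    (Φ : ℕ → ℝ → ℝ) (hΦ : IsMusielakOrlicz Φ)
    (a : ℕ → ℕ → ℝ) (hA : MatrixClassA a) :
    (∀ x : ℕ → X, MemH Φ a x → MemL Φ a x) ∧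
    (∀ x y : ℕ → X, MemH Φ a x → MemH Φ a y → MemH Φ a (x + y)) ∧
    (∀ (c : ℝ) (x : ℕ → X), MemH Φ a x → MemH Φ a (c • x)) ∧
    (∀ x : ℕ → X, MemL Φ a x →
      (∀ ε > (0 : ℝ), ∃ y : ℕ → X, MemH Φ a y ∧ ANorm Φ a (x - y) < ε) →
      MemH Φ a x) ∧
    (∀ x : ℕ → X, MemH Φ a x →
      Tendsto (fun m => ANorm Φ a (x - sect x m)) atTop (𝓝 0)) :=
  hPhiA_closed_subspace_and_AK_general Φ hΦ a
end

section
/- Suppose A belongs to the class 𝒜 and Φ satisfies condition δ2. Then for every ε > 0 there exists δ = δ(ε) > 0 such that ρ_Φ^A(x̄) > δ whenever x̄ ∈ l_Φ^A(X) with ‖x̄‖_Φ^A ≥ ε. -/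
open Filter Topology

/- ### Auxiliary lemmas -/

lemma IsOrliczFn.nonneg_s9 {φ : ℝ → ℝ} (h : IsOrliczFn φ) {t : ℝ} (ht : 0 ≤ t) :
    0 ≤ φ t := by
  have := h.monotoneOn (Set.mem_Ici.2 le_rfl) (Set.mem_Ici.2 ht) ht
  rwa [h.map_zero] at this

/-- Doubling preserves summability under δ₂. -/
lemma summable_double (Φ : ℕ → ℝ → ℝ) (hΦ : IsMusielakOrlicz Φ)
    (hδ : MOCondDelta2 Φ) (v : ℕ → ℝ) (hv : ∀ n, 0 ≤ v n)
    (hs : Summable fun n => Φ n (v n)) :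
    Summable fun n => Φ n (2 * v n) := by
  obtain ⟨K, hK, δ0, hδ0, c, hc0, hcs, hkey⟩ := hδ
  have htend : Tendsto (fun n => Φ n (v n)) atTop (𝓝 0) := hs.tendsto_atTop_zero
  obtain ⟨N, hN⟩ := (htend.eventually_le_const hδ0).exists_forall_of_atTop
  rw [← summable_nat_add_iff N]
  apply Summable.of_nonneg_of_le
  · intro n; exact (hΦ _).nonneg_s9 (mul_nonneg two_pos.le (hv _))
  · intro n
    exact hkey (n + N) (v (n + N)) (hv _) (hN _ (Nat.le_add_left _ _))
  · exact (((summable_nat_add_iff (f := fun n => Φ n (v n)) N).2 hs).mul_left K).add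
      ((summable_nat_add_iff (f := c) N).2 hcs)

/-- Multiplying by `2^m` preserves summability under δ₂. -/
lemma summable_pow_double (Φ : ℕ → ℝ → ℝ) (hΦ : IsMusielakOrlicz Φ)
    (hδ : MOCondDelta2 Φ) (v : ℕ → ℝ) (hv : ∀ n, 0 ≤ v n)
    (hs : Summable fun n => Φ n (v n)) (m : ℕ) :
    Summable fun n => Φ n (2 ^ m * v n) := by
  induction m with
  | zero => simpa using hs
  | succ m ih =>
      have := summable_double Φ hΦ hδ (fun n => 2 ^ m * v n)
        (fun n => mul_nonneg (by positivity) (hv n)) ih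
      convert this using 2 with n
      ring

/-- Key step: the modular of `2x` is small if the modular of `x` is small. -/
lemma step_double (Φ : ℕ → ℝ → ℝ) (hΦ : IsMusielakOrlicz Φ)
    (hδ : MOCondDelta2 Φ) :
    ∀ η > (0 : ℝ), ∃ δ > (0 : ℝ), ∀ v : ℕ → ℝ, (∀ n, 0 ≤ v n) →
      Summable (fun n => Φ n (v n)) → (∑' n, Φ n (v n)) ≤ δ →
      Summable (fun n => Φ n (2 * v n)) ∧ (∑' n, Φ n (2 * v n)) ≤ η := by
  intro η hη
  obtain ⟨K, hK, δ0, hδ0, c, hc0, hcs, hkey⟩ := hδ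
  -- choose N with tail of c small
  have htail : Tendsto (fun i => ∑' n, c (n + i)) atTop (𝓝 0) :=
    tendsto_sum_nat_add c
  obtain ⟨N, hN⟩ := (htail.eventually_le_const (by positivity : (0:ℝ) < η/3)).exists_forall_of_atTop
  have hNtail : (∑' n, c (n + N)) ≤ η / 3 := hN N le_rfl
  -- for each n < N choose t n > 0 with Φ n (2 * t n) ≤ η / (3 * (N+1))
  have hchoice : ∀ n : ℕ, ∃ t : ℝ, 0 < t ∧ Φ n (2 * t) ≤ η / (3 * (N + 1)) := by
    intro n
    have hb : (0:ℝ) < η / (3 * (N + 1)) := by positivity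
    have hcont : ContinuousWithinAt (Φ n) (Set.Ici 0) 0 :=
      (hΦ n).continuousOn 0 (Set.mem_Ici.2 le_rfl)
    have h2 : Tendsto (fun t : ℝ => 2 * t) (𝓝[>] 0) (𝓝[Set.Ici 0] 0) := by
      apply tendsto_nhdsWithin_of_tendsto_nhds_of_eventually_within
      · have h : Tendsto (fun t : ℝ => 2 * t) (𝓝 0) (𝓝 (2 * 0)) :=
          (continuous_const.mul continuous_id).tendsto 0
        have h' := h.mono_left (nhdsWithin_le_nhds (s := Set.Ioi (0:ℝ)))
        simpa using h'
      · filter_upwards [self_mem_nhdsWithin] with t (ht : 0 < t)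
        exact Set.mem_Ici.2 (by positivity)
    have h3 : Tendsto (fun t : ℝ => Φ n (2 * t)) (𝓝[>] 0) (𝓝 0) := by
      have := hcont.tendsto.comp h2
      rwa [(hΦ n).map_zero] at this
    have h4 : ∀ᶠ t in 𝓝[>] (0:ℝ), Φ n (2 * t) < η / (3 * (N + 1)) :=
      h3.eventually_lt_const hb
    obtain ⟨t, ht1, ht2⟩ := (h4.and self_mem_nhdsWithin).exists
    exact ⟨t, ht2, ht1.le⟩
  choose t ht hΦt using hchoice
  -- choose δ
  obtain ⟨δ1, hδ1pos, hδ1⟩ : ∃ δ1 > (0:ℝ), ∀ n < N, δ1 < Φ n (t n) := by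
    rcases Nat.eq_zero_or_pos N with h | h
    · exact ⟨1, one_pos, by omega⟩
    · have hne : (Finset.range N).Nonempty := ⟨0, Finset.mem_range.2 h⟩
      obtain ⟨b, hb, hbmin⟩ := Finset.exists_min_image (Finset.range N)
        (fun n => Φ n (t n)) hne
      refine ⟨Φ b (t b) / 2, by have := (hΦ b).pos _ (ht b); linarith, ?_⟩
      intro n hn
      have := hbmin n (Finset.mem_range.2 hn)
      have hbpos := (hΦ b).pos _ (ht b)
      linarith
  refine ⟨min (min δ0 δ1) (η / (3 * K)), by positivity, ?_⟩
  intro v hv hs hsum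
  have hterm : ∀ n, Φ n (v n) ≤ min (min δ0 δ1) (η / (3 * K)) := by
    intro n
    calc Φ n (v n) ≤ ∑' n, Φ n (v n) :=
          Summable.le_tsum hs n (fun j _ => (hΦ j).nonneg_s9 (hv j))
      _ ≤ _ := hsum
  have htδ0 : ∀ n, Φ n (v n) ≤ δ0 := fun n =>
    (hterm n).trans ((min_le_left _ _).trans (min_le_left _ _))
  -- for n < N : v n ≤ t n
  have hsmall : ∀ n < N, v n ≤ t n := by
    intro n hn
    by_contra hlt
    push_neg at hlt
    have h1 : Φ n (t n) ≤ Φ n (v n) :=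
      (hΦ n).monotoneOn (Set.mem_Ici.2 (ht n).le) (Set.mem_Ici.2 (hv n)) hlt.le
    have h2 : Φ n (v n) ≤ δ1 :=
      (hterm n).trans ((min_le_left _ _).trans (min_le_right _ _))
    exact absurd (hδ1 n hn) (by linarith)
  -- summability
  have hsum2 : Summable fun n => Φ n (2 * v n) :=
    summable_double Φ hΦ ⟨K, hK, δ0, hδ0, c, hc0, hcs, hkey⟩ v hv hs
  refine ⟨hsum2, ?_⟩
  -- split the tsum at N
  rw [← Summable.sum_add_tsum_nat_add N hsum2]
  have hpart1 : (∑ n ∈ Finset.range N, Φ n (2 * v n)) ≤ η / 3 := by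
    calc (∑ n ∈ Finset.range N, Φ n (2 * v n))
        ≤ ∑ n ∈ Finset.range N, η / (3 * (N + 1)) := by
          apply Finset.sum_le_sum
          intro n hn
          have hn' := Finset.mem_range.1 hn
          calc Φ n (2 * v n) ≤ Φ n (2 * t n) := by
                apply (hΦ n).monotoneOn (Set.mem_Ici.2 (mul_nonneg two_pos.le (hv n)))
                  (Set.mem_Ici.2 (mul_nonneg two_pos.le (ht n).le))
                have := hsmall n hn'; linarith
            _ ≤ η / (3 * (N + 1)) := hΦt n
      _ = N * (η / (3 * (N + 1))) := by rw [Finset.sum_const, Finset.card_range]; ring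
      _ ≤ η / 3 := by
          have h0 : (0:ℝ) ≤ (N:ℝ) := Nat.cast_nonneg N
          have h1 : (N:ℝ) / ((N:ℝ) + 1) ≤ 1 := by
            rw [div_le_one (by positivity)]; linarith
          calc (N:ℝ) * (η / (3 * ((N:ℝ) + 1))) = η / 3 * ((N:ℝ) / ((N:ℝ) + 1)) := by
                have hN1 : ((N:ℝ) + 1) ≠ 0 := by positivity
                field_simp
            _ ≤ η / 3 * 1 := mul_le_mul_of_nonneg_left h1 (by linarith)
            _ = η / 3 := mul_one _
  have hpart2 : (∑' n, Φ (n + N) (2 * v (n + N))) ≤ K * (η / (3 * K)) + η / 3 := by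
    have hb : ∀ n, Φ (n + N) (2 * v (n + N)) ≤ K * Φ (n + N) (v (n + N)) + c (n + N) :=
      fun n => hkey (n + N) _ (hv _) (htδ0 _)
    have hsA : Summable fun n => Φ (n + N) (v (n + N)) :=
      (summable_nat_add_iff (f := fun n => Φ n (v n)) N).2 hs
    have hsC : Summable fun n => c (n + N) := (summable_nat_add_iff (f := c) N).2 hcs
    have hsK : Summable fun n => K * Φ (n + N) (v (n + N)) + c (n + N) :=
      (hsA.mul_left K).add hsC
    calc (∑' n, Φ (n + N) (2 * v (n + N)))
        ≤ ∑' n, (K * Φ (n + N) (v (n + N)) + c (n + N)) :=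
          Summable.tsum_le_tsum hb ((summable_nat_add_iff N).2 hsum2) hsK
      _ = K * (∑' n, Φ (n + N) (v (n + N))) + ∑' n, c (n + N) := by
          rw [Summable.tsum_add (hsA.mul_left K) hsC, tsum_mul_left]
      _ ≤ K * (η / (3 * K)) + η / 3 := by
          have h1 : (∑' n, Φ (n + N) (v (n + N))) ≤ η / (3 * K) := by
            calc (∑' n, Φ (n + N) (v (n + N)))
                ≤ ∑' n, Φ n (v n) := by
                  rw [← Summable.sum_add_tsum_nat_add N hs]
                  have : (0:ℝ) ≤ ∑ n ∈ Finset.range N, Φ n (v n) :=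
                    Finset.sum_nonneg fun n _ => (hΦ n).nonneg_s9 (hv n)
                  linarith
              _ ≤ _ := hsum.trans (min_le_right _ _)
          have := mul_le_mul_of_nonneg_left h1 hK.le
          linarith
  have hKη : K * (η / (3 * K)) = η / 3 := by
    have hK0 : K ≠ 0 := ne_of_gt hK
    field_simp
  rw [hKη] at hpart2
  linarith

/-- Iterated step: the modular of `2^m x` is small if the modular of `x` is small. -/
lemma step_pow (Φ : ℕ → ℝ → ℝ) (hΦ : IsMusielakOrlicz Φ)
    (hδ : MOCondDelta2 Φ) (m : ℕ) :
    ∀ η > (0 : ℝ), ∃ δ > (0 : ℝ), ∀ v : ℕ → ℝ, (∀ n, 0 ≤ v n) →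
      Summable (fun n => Φ n (v n)) → (∑' n, Φ n (v n)) ≤ δ →
      Summable (fun n => Φ n (2 ^ m * v n)) ∧ (∑' n, Φ n (2 ^ m * v n)) ≤ η := by
  induction m with
  | zero =>
      intro η hη
      exact ⟨η, hη, fun v hv hs hsum => by simpa using ⟨hs, hsum⟩⟩
  | succ m ih =>
      intro η hη
      obtain ⟨δ1, hδ1, h1⟩ := step_double Φ hΦ hδ η hη
      obtain ⟨δ2, hδ2, h2⟩ := ih δ1 hδ1
      refine ⟨δ2, hδ2, fun v hv hs hsum => ?_⟩
      obtain ⟨hs', hsum'⟩ := h2 v hv hs hsum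
      obtain ⟨hs'', hsum''⟩ := h1 (fun n => 2 ^ m * v n)
        (fun n => mul_nonneg (by positivity) (hv n)) hs' hsum'
      have hfun : (fun n => Φ n (2 ^ (m + 1) * v n)) = fun n => Φ n (2 * (2 ^ m * v n)) := by
        funext n; congr 1; ring
      exact ⟨hfun ▸ hs'', hfun ▸ hsum''⟩

/-- for `A ∈ 𝒜` and `Φ ∈ δ₂`: for every `ε > 0` there is `δ > 0`
with `ρ_Φ^A(x̄) > δ` whenever `‖x̄‖_Φ^A ≥ ε`. -/
theorem modular_bounded_below_of_norm_bounded_below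
    {X : Type*} [NormedAddCommGroup X] [NormedSpace ℝ X] [CompleteSpace X]
    (Φ : ℕ → ℝ → ℝ) (hΦ : IsMusielakOrlicz Φ) (hδ : MOCondDelta2 Φ)
    (a : ℕ → ℕ → ℝ) (hA : MatrixClassA a) :
    ∀ ε > (0 : ℝ), ∃ δ > (0 : ℝ),
      ∀ x : ℕ → X, MemL Φ a x → ε ≤ ANorm Φ a x → δ < rhoA Φ a x := by
  intro ε hε
  obtain ⟨m, hm⟩ := pow_unbounded_of_one_lt (2 / ε) (one_lt_two (α := ℝ))
  obtain ⟨δ, hδpos, hkey⟩ := step_pow Φ hΦ hδ m 1 one_pos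
  refine ⟨δ, hδpos, ?_⟩
  intro x hx hnorm
  by_contra hcon
  push_neg at hcon
  -- rowSum is nonnegative
  have hrs : ∀ n, 0 ≤ rowSum a x n := fun n =>
    tsum_nonneg fun k => by positivity
  -- summability of the modular at σ = 1
  obtain ⟨-, -, σ0, hσ0, hsσ0⟩ := hx
  have hsum1 : Summable fun n => Φ n (rowSum a x n) := by
    obtain ⟨j, hj⟩ := pow_unbounded_of_one_lt σ0 (one_lt_two (α := ℝ))
    have hs2 : Summable fun n => Φ n (2 ^ j * (rowSum a x n / σ0)) :=
      summable_pow_double Φ hΦ hδ _ (fun n => div_nonneg (hrs n) hσ0.le) hsσ0 j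
    apply Summable.of_nonneg_of_le (fun n => (hΦ n).nonneg_s9 (hrs n)) _ hs2
    intro n
    apply (hΦ n).monotoneOn (Set.mem_Ici.2 (hrs n))
      (Set.mem_Ici.2 (mul_nonneg (by positivity) (div_nonneg (hrs n) hσ0.le)))
    calc rowSum a x n = 2 ^ j * (rowSum a x n / 2 ^ j) := by field_simp
      _ ≤ 2 ^ j * (rowSum a x n / σ0) := by
          gcongr
          exact hrs n
  -- the modular is at most δ
  have hρ : (∑' n, Φ n (rowSum a x n)) ≤ δ := hcon
  obtain ⟨hs2, hsum2⟩ := hkey (rowSum a x) hrs hsum1 hρ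
  have hle : ∀ n, Φ n (rowSum a x n / (ε / 2)) ≤ Φ n (2 ^ m * rowSum a x n) := by
    intro n
    apply (hΦ n).monotoneOn (Set.mem_Ici.2 (div_nonneg (hrs n) (by positivity)))
      (Set.mem_Ici.2 (mul_nonneg (by positivity) (hrs n)))
    have heq : rowSum a x n / (ε / 2) = 2 / ε * rowSum a x n := by
      field_simp
    rw [heq]
    exact mul_le_mul_of_nonneg_right hm.le (hrs n)
  have hsummem : Summable fun n => Φ n (rowSum a x n / (ε / 2)) :=
    Summable.of_nonneg_of_le
      (fun n => (hΦ n).nonneg_s9 (div_nonneg (hrs n) (by positivity))) hle hs2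
  have hmem : (ε / 2) ∈ {σ : ℝ | 0 < σ ∧ (Summable fun n => Φ n (rowSum a x n / σ)) ∧
      (∑' n, Φ n (rowSum a x n / σ)) ≤ 1} :=
    ⟨by positivity, hsummem, (Summable.tsum_le_tsum hle hsummem hs2).trans hsum2⟩
  have hbdd : BddBelow {σ : ℝ | 0 < σ ∧ (Summable fun n => Φ n (rowSum a x n / σ)) ∧
      (∑' n, Φ n (rowSum a x n / σ)) ≤ 1} := ⟨0, fun σ hσ => hσ.1.le⟩
  have hAle : ANorm Φ a x ≤ ε / 2 := csInf_le hbdd hmem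
  linarith
end
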